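/- Let n ≥ 4 and let I be a proper subset of J = {1, 2, …, n} with 2 ≤ |I| < n. Then there exist an element j ∈ J ∖ I and two elements i_s, i_t ∈ I such that |j − i_s| = 1 and |j − i_t| > 1. -/

import Mathlib

/-! Some `j ∉ I` is adjacent to `I`, since a nonempty proper subset of an interval has a
boundary point. If every element of `I` is within distance one of `j`, then `I = {j - 1, j + 1}`,
and since `n ≥ 4` one of `j - 2`, `j + 2` lies in `J`; it is adjacent to one point of `I` and at
distance three from the other. -/

open Finset

theorem Nat.exists_le_lt_and_not_succ {p : ℕ → Prop} {a b : ℕ} (hab : a ≤ b) (ha : p a)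
    (hb : ¬ p b) : ∃ k, a ≤ k ∧ k < b ∧ p k ∧ ¬ p (k + 1) := by
  induction b, hab using Nat.le_induction with
  | base => exact absurd ha hb
  | succ b hab ih =>
    by_cases hpb : p b
    · exact ⟨b, hab, b.lt_succ_self, hpb, hb⟩
    · obtain ⟨k, hak, hkb, hpk, hpk'⟩ := ih hpb
      exact ⟨k, hak, hkb.trans b.lt_succ_self, hpk, hpk'⟩

theorem exists_mem_sdiff_abs_sub_eq_one {I : Finset ℕ} {a b : ℕ} (hI : I.Nonempty)
    (hIab : I ⊂ Icc a b) : ∃ j ∈ Icc a b \ I, ∃ i ∈ I, |(j : ℤ) - i| = 1 := by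
  obtain ⟨i, hi⟩ := hI
  obtain ⟨c, hc, hcI⟩ := exists_of_ssubset hIab
  have hi' := mem_Icc.mp (hIab.subset hi)
  rw [mem_Icc] at hc
  rcases le_total i c with hic | hci
  · obtain ⟨k, hik, hkc, hk, hk'⟩ := Nat.exists_le_lt_and_not_succ (p := (· ∈ I)) hic hi hcI
    exact ⟨k + 1, mem_sdiff.mpr ⟨mem_Icc.mpr ⟨by omega, by omega⟩, hk'⟩, k, hk, by simp⟩
  · obtain ⟨k, hck, hki, hk, hk'⟩ :=
      Nat.exists_le_lt_and_not_succ (p := (· ∉ I)) hci hcI (not_not.mpr hi)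
    exact ⟨k, mem_sdiff.mpr ⟨mem_Icc.mpr ⟨by omega, by omega⟩, hk⟩, k + 1, not_not.mp hk',
      by simp⟩

theorem subset_pair_of_forall_abs_sub_le_one {I : Finset ℕ} {j : ℕ} (hj : j ∉ I)
    (hI : ∀ t ∈ I, |(j : ℤ) - t| ≤ 1) : I ⊆ {j - 1, j + 1} := by
  intro t ht
  have hjt : t ≠ j := fun h => hj (h ▸ ht)
  have := abs_le.mp (hI t ht)
  rw [mem_insert, mem_singleton]
  omega

theorem exists_adjacent_and_far_pair {n j : ℕ} (hn : 4 ≤ n) (hj : 2 ≤ j) (hjn : j + 1 ≤ n) :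
    ∃ k ∈ Icc 1 n \ {j - 1, j + 1}, ∃ is ∈ ({j - 1, j + 1} : Finset ℕ),
      ∃ it ∈ ({j - 1, j + 1} : Finset ℕ), |(k : ℤ) - is| = 1 ∧ 1 < |(k : ℤ) - it| := by
  by_cases h : j + 2 ≤ n
  · refine ⟨j + 2, ?_, j + 1, by simp, j - 1, by simp, ?_, ?_⟩
    · simp only [mem_sdiff, mem_Icc, mem_insert, mem_singleton]; omega
    · rw [abs_eq zero_le_one]; omega
    · rw [lt_abs]; omega
  · refine ⟨j - 2, ?_, j - 1, by simp, j + 1, by simp, ?_, ?_⟩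
    · simp only [mem_sdiff, mem_Icc, mem_insert, mem_singleton]; omega
    · rw [abs_eq zero_le_one]; omega
    · rw [lt_abs]; omega

theorem exists_adjacent_and_far_general (n : ℕ) (hn : 4 ≤ n) (I : Finset ℕ)
    (hIJ : I ⊂ Finset.Icc 1 n) (hcard : 2 ≤ I.card) :
    ∃ j ∈ Finset.Icc 1 n \ I, ∃ is ∈ I, ∃ it ∈ I,
      |(j : ℤ) - (is : ℤ)| = 1 ∧ 1 < |(j : ℤ) - (it : ℤ)| := by
  obtain ⟨j, hj, i, hi, hji⟩ :=
    exists_mem_sdiff_abs_sub_eq_one (card_pos.mp (by omega)) hIJ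
  by_cases hfar : ∃ t ∈ I, 1 < |(j : ℤ) - t|
  · obtain ⟨t, ht, hjt⟩ := hfar
    exact ⟨j, hj, i, hi, t, ht, hji, hjt⟩
  push Not at hfar
  have hjI := (mem_sdiff.mp hj).2
  have hI : I = {j - 1, j + 1} :=
    eq_of_subset_of_card_le (subset_pair_of_forall_abs_sub_le_one hjI hfar)
      (card_le_two.trans hcard)
  have hlo := mem_Icc.mp (hIJ.subset (hI ▸ mem_insert_self _ _))
  have hhi := mem_Icc.mp (hIJ.subset (hI ▸ mem_insert_of_mem (mem_singleton_self _)))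
  rw [hI]
  exact exists_adjacent_and_far_pair hn (by omega) hhi.2

/-- Let `n ≥ 4` and let `I` be a proper subset of
`J = {1, 2, …, n}` with `2 ≤ |I| < n`.  Then there exist `j ∈ J \ I` and
`i_s, i_t ∈ I` with `|j - i_s| = 1` and `|j - i_t| > 1`. -/
theorem exists_adjacent_and_far (n : ℕ) (hn : 4 ≤ n) (I : Finset ℕ)
    (hIJ : I ⊂ Finset.Icc 1 n) (hcard : 2 ≤ I.card) (hlt : I.card < n) :
    ∃ j ∈ Finset.Icc 1 n \ I, ∃ is ∈ I, ∃ it ∈ I,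
      |(j : ℤ) - (is : ℤ)| = 1 ∧ 1 < |(j : ℤ) - (it : ℤ)| :=
  exists_adjacent_and_far_general n hn I hIJ hcard
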